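/- arXiv:2412.11931 — 4 statements merged into one kernel-verified Lean document; each statement's English description precedes it below -/
import Mathlib

section
/- Let n and k be integers with 2 ≤ k ≤ n/2. Define for i ∈ {0,1} and x ∈ {0,1}^n: J^(i)(x) = k + |x|_i if |x|_i ∈ [0..n-k] ∪ {n}, and J^(i)(x) = n - |x|_i otherwise, and let OJZJ(x) = (J^(1)(x), J^(0)(x)). Then x ∈ {0,1}^n is Pareto-optimal (under component-wise maximization) if and only if |x|_1 ∈ {0} ∪ [k..n-k] ∪ {n}. -/
/-- Number of ones of a bit string. -/
def onesCount {n : ℕ} (x : Fin n → Bool) : ℕ :=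
  (Finset.univ.filter fun i => x i = true).card

/-- Number of zeros of a bit string. -/
def zerosCount {n : ℕ} (x : Fin n → Bool) : ℕ :=
  (Finset.univ.filter fun i => x i = false).card

/-- The first OneJumpZeroJump objective `J^(1)`, based on the number of ones. -/
def J1 (n k : ℕ) (x : Fin n → Bool) : ℕ :=
  if onesCount x ≤ n - k ∨ onesCount x = n then k + onesCount x else n - onesCount x

/-- The second OneJumpZeroJump objective `J^(0)`, based on the number of zeros. -/
def J0 (n k : ℕ) (x : Fin n → Bool) : ℕ :=
  if zerosCount x ≤ n - k ∨ zerosCount x = n then k + zerosCount x else n - zerosCount x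

/-- `x` is Pareto-optimal for OneJumpZeroJump (component-wise maximization). -/
def ParetoOJZJ (n k : ℕ) (x : Fin n → Bool) : Prop :=
  ¬ ∃ y : Fin n → Bool,
    J1 n k x ≤ J1 n k y ∧ J0 n k x ≤ J0 n k y ∧
    (J1 n k x < J1 n k y ∨ J0 n k x < J0 n k y)

lemma ones_add_zeros {n : ℕ} (x : Fin n → Bool) : onesCount x + zerosCount x = n := by
  classical
  have := Finset.card_filter_add_card_filter_not
    (s := (Finset.univ : Finset (Fin n))) (p := fun i => x i = true)
  simpa [onesCount, zerosCount] using this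

lemma onesCount_le {n : ℕ} (x : Fin n → Bool) : onesCount x ≤ n := by
  have := ones_add_zeros x; omega

lemma exists_onesCount (n t : ℕ) (h : t ≤ n) : ∃ y : Fin n → Bool, onesCount y = t := by
  refine ⟨fun i => decide ((i : ℕ) < t), ?_⟩
  unfold onesCount
  simp only [decide_eq_true_eq]
  have e : (Finset.univ.filter fun i : Fin n => (i : ℕ) < t)
      = (Finset.range t).attachFin (fun m hm => lt_of_lt_of_le (Finset.mem_range.mp hm) h) := by
    ext i
    simp
  rw [e, Finset.card_attachFin, Finset.card_range]

lemma sum_le (n k : ℕ) (hk : 2 ≤ k) (hkn : 2 * k ≤ n) (y : Fin n → Bool) :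
    J1 n k y + J0 n k y ≤ 2 * k + n := by
  have h1 := ones_add_zeros y
  unfold J1 J0
  split_ifs <;> omega

/-- A point is Pareto-optimal for OneJumpZeroJump if and only if its number of
ones lies in `{0} ∪ [k..n-k] ∪ {n}`. -/
theorem stmt_13 (n k : ℕ) (hk : 2 ≤ k) (hkn : 2 * k ≤ n) (x : Fin n → Bool) :
    ParetoOJZJ n k x ↔
      onesCount x = 0 ∨ (k ≤ onesCount x ∧ onesCount x ≤ n - k) ∨ onesCount x = n := by
  have hxz := ones_add_zeros x
  constructor
  · intro hp
    by_contra hbad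
    push_neg at hbad
    obtain ⟨h0, h1, h2⟩ := hbad
    rcases le_or_gt k (onesCount x) with hge | hlt
    · -- n - k < onesCount x < n
      have hmb : n - k < onesCount x := h1 hge
      obtain ⟨y, hy⟩ := exists_onesCount n (n - k) (by omega)
      have hyz := ones_add_zeros y
      exact hp ⟨y, by unfold J1 J0; rw [hy]; split_ifs <;> omega⟩
    · -- 0 < onesCount x < k
      obtain ⟨y, hy⟩ := exists_onesCount n k (by omega)
      have hyz := ones_add_zeros y
      exact hp ⟨y, by unfold J1 J0; rw [hy]; split_ifs <;> omega⟩
  · rintro hg ⟨y, hy1, hy2, hy3⟩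
    have hsy := sum_le n k hk hkn y
    have hsx : J1 n k x + J0 n k x = 2 * k + n := by
      unfold J1 J0
      split_ifs <;> omega
    omega
end

section
/- Let F be a finite multiset of points in ℝ^m, all pairwise non-dominated or with equal objective values, and fix a target value A ∈ ℝ^m attained by some point of F. For each coordinate j, sort F by increasing j-th coordinate and assign crowding distance contributions: boundary elements get +∞, and an interior element at sorted position i gets (value at position i+1 minus value at position i-1) divided by (max minus min), summed over all m coordinates. Then the number of elements x of F with f(x) = A and positive total crowding distance is at most 2m. -/
/-- The crowding-distance contribution of the individual `i` in coordinate
`j`, given for each coordinate `j` a sorting `σ j` of the `N` individuals by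
increasing `j`-th coordinate. Boundary elements of the sorting get `∞`; an
interior element at sorted position `p` gets the value at position `p + 1`
minus the value at position `p - 1`, divided by the maximum minus the minimum
value in that coordinate. -/
noncomputable def cdContrib {m N : ℕ} (f : Fin N → Fin m → ℝ)
    (σ : Fin m → (Fin N ≃ Fin N)) (j : Fin m) (i : Fin N) : ENNReal :=
  let p := (σ j).symm i
  if h : (p : ℕ) = 0 ∨ (p : ℕ) = N - 1 then ⊤
  else ENNReal.ofReal
    ((f (σ j ⟨(p : ℕ) + 1, by have := p.isLt; omega⟩) j -
        f (σ j ⟨(p : ℕ) - 1, by have := p.isLt; omega⟩) j) /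
      (f (σ j ⟨N - 1, by have := p.isLt; omega⟩) j -
        f (σ j ⟨0, by have := p.isLt; omega⟩) j))

/-- The total crowding distance of individual `i`: the sum of its
contributions over all `m` coordinates. -/
noncomputable def cDis {m N : ℕ} (f : Fin N → Fin m → ℝ)
    (σ : Fin m → (Fin N ≃ Fin N)) (i : Fin N) : ENNReal :=
  ∑ j, cdContrib f σ j i

lemma endpoint {m N : ℕ} (f : Fin N → Fin m → ℝ)
    (σ : Fin m → (Fin N ≃ Fin N))
    (hσ : ∀ j, Monotone fun i => f ((σ j) i) j)
    (A : Fin m → ℝ) (j : Fin m) (i : Fin N) (hiA : f i = A)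
    (hpos : 0 < cdContrib f σ j i) :
    IsLeast {p : Fin N | f ((σ j) p) j = A j} ((σ j).symm i) ∨
    IsGreatest {p : Fin N | f ((σ j) p) j = A j} ((σ j).symm i) := by
  set p := (σ j).symm i with hp
  have hpi : (σ j) p = i := Equiv.apply_symm_apply _ _
  have hmem : f ((σ j) p) j = A j := by rw [hpi, hiA]
  by_cases h : (p : ℕ) = 0 ∨ (p : ℕ) = N - 1
  · rcases h with h | h
    · left
      refine ⟨hmem, fun q hq => ?_⟩
      rw [Fin.le_def, h]; omega
    · right
      refine ⟨hmem, fun q hq => ?_⟩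
      rw [Fin.le_def, h]; have := q.isLt; omega
  · rw [cdContrib] at hpos
    simp only [← hp, dif_neg h] at hpos
    rw [ENNReal.ofReal_pos] at hpos
    set a := f (σ j ⟨(p : ℕ) - 1, by have := p.isLt; omega⟩) j with ha
    set b := f (σ j ⟨(p : ℕ) + 1, by have := p.isLt; omega⟩) j with hb
    have hden : 0 ≤ f (σ j ⟨N - 1, by have := p.isLt; omega⟩) j -
        f (σ j ⟨0, by have := p.isLt; omega⟩) j := by
      have := hσ j (show (⟨0, by have := p.isLt; omega⟩ : Fin N) ≤ ⟨N - 1, by have := p.isLt; omega⟩ by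
        simp [Fin.le_def])
      simpa using sub_nonneg.mpr this
    have hnum : a < b := by
      rcases lt_or_eq_of_le hden with hd | hd
      · have := (div_pos_iff.mp hpos)
        rcases this with ⟨h1, _⟩ | ⟨_, h2⟩
        · linarith
        · linarith
      · rw [← hd, div_zero] at hpos; linarith
    have hap : a ≤ A j := by
      have := hσ j (show (⟨(p : ℕ) - 1, by have := p.isLt; omega⟩ : Fin N) ≤ p by
        simp [Fin.le_def])
      simpa [hmem] using this
    have hpb : A j ≤ b := by
      have := hσ j (show p ≤ (⟨(p : ℕ) + 1, by have := p.isLt; omega⟩ : Fin N) by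
        simp [Fin.le_def])
      simpa [hmem] using this
    rcases lt_or_eq_of_le hap with hlt | heq
    · left
      refine ⟨hmem, fun q hq => ?_⟩
      by_contra hc
      push_neg at hc
      have hq1 : q ≤ (⟨(p : ℕ) - 1, by have := p.isLt; omega⟩ : Fin N) := by
        rw [Fin.le_def]; simp
        rw [Fin.lt_def] at hc
        omega
      have := hσ j hq1
      simp only at this
      rw [hq] at this
      linarith
    · right
      have hbgt : A j < b := by
        rcases lt_or_eq_of_le hpb with h' | h'
        · exact h'
        · exfalso; rw [← heq] at h'; linarith
      refine ⟨hmem, fun q hq => ?_⟩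
      by_contra hc
      push_neg at hc
      have hq1 : (⟨(p : ℕ) + 1, by have := p.isLt; omega⟩ : Fin N) ≤ q := by
        rw [Fin.le_def]; simp
        rw [Fin.lt_def] at hc
        have := q.isLt; omega
      have := hσ j hq1
      simp only at this
      rw [hq] at this
      linarith

/-- In a finite multiset of points in `ℝ^m` that are pairwise non-dominated or
equal, for any attained objective value `A`, at most `2m` elements with value
`A` have positive crowding distance. -/
theorem stmt_16 (m N : ℕ) (f : Fin N → Fin m → ℝ)
    (σ : Fin m → (Fin N ≃ Fin N))
    (hσ : ∀ j, Monotone fun i => f ((σ j) i) j)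
    (hnd : ∀ i i' : Fin N, (∀ j, f i j ≤ f i' j) → f i = f i')
    (A : Fin m → ℝ) (hA : ∃ i, f i = A) :
    Nat.card {i : Fin N // f i = A ∧ 0 < cDis f σ i} ≤ 2 * m := by
  classical
  have hj : ∀ x : {i : Fin N // f i = A ∧ 0 < cDis f σ i},
      ∃ j : Fin m, 0 < cdContrib f σ j x.1 := by
    rintro ⟨i, hiA, hpos⟩
    by_contra hc
    push_neg at hc
    simp only [nonpos_iff_eq_zero] at hc
    rw [cDis, Finset.sum_eq_zero (fun j _ => hc j)] at hpos
    exact lt_irrefl 0 hpos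
  set S : Fin m → Set (Fin N) := fun j => {p : Fin N | f ((σ j) p) j = A j} with hS
  set g : {i : Fin N // f i = A ∧ 0 < cDis f σ i} → Fin m × Bool := fun x =>
    ((hj x).choose,
      decide (IsLeast (S (hj x).choose) ((σ (hj x).choose).symm x.1))) with hg
  have hginj : Function.Injective g := by
    intro x y hxy
    have hx := endpoint f σ hσ A (hj x).choose x.1 x.2.1 (hj x).choose_spec
    have hy := endpoint f σ hσ A (hj y).choose y.1 y.2.1 (hj y).choose_spec
    have h1 : (hj x).choose = (hj y).choose := congrArg Prod.fst hxy
    have h2 := congrArg Prod.snd hxy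
    simp only [hg, decide_eq_decide] at h2
    set j := (hj x).choose with hjx
    rw [← h1] at hy h2
    have hkey : (σ j).symm x.1 = (σ j).symm y.1 := by
      by_cases hL : IsLeast (S j) ((σ j).symm x.1)
      · have hLy : IsLeast (S j) ((σ j).symm y.1) := h2.mp hL
        exact hL.unique hLy
      · have hGx : IsGreatest (S j) ((σ j).symm x.1) := hx.resolve_left hL
        have hLy : ¬ IsLeast (S j) ((σ j).symm y.1) := fun h => hL (h2.mpr h)
        have hGy : IsGreatest (S j) ((σ j).symm y.1) := hy.resolve_left hLy
        exact hGx.unique hGy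
    have : x.1 = y.1 := (σ j).symm.injective hkey
    exact Subtype.ext this
  have := Nat.card_le_card_of_injective g hginj
  simpa [Nat.card_eq_fintype_card, Nat.mul_comm] using this
end

section
/- Let C, S, m be positive integers and suppose a multiset F of individuals is partitioned into S classes by objective value, where each class contains at most 2m 'protected' individuals. If C individuals are selected from F by first taking all protected individuals and then filling remaining slots as evenly as possible across the S classes (each class receiving up to ⌊(remaining)/S⌋ additional members, capped by its size), then every class A retains at least min(max(⌊C/S⌋ - 2m, 0), |A|) selected individuals. -/
/-- Balanced selection guarantee: a multiset of individuals is partitioned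
into `S` classes with sizes `a i`, each containing `p i ≤ 2m` "protected"
individuals. Selecting `C` individuals by first taking all protected ones and
then giving each class up to `⌊(C - Σ p)/S⌋` further members (capped by its
size) retains at least `min (max (⌊C/S⌋ - 2m) 0) (a i)` members of each class
`i`. (All subtractions and divisions are truncated natural operations.) -/
theorem stmt_17 (C S m : ℕ) (hC : 0 < C) (hS : 0 < S) (hm : 0 < m)
    (a p s : Fin S → ℕ)
    (hp : ∀ i, p i ≤ 2 * m) (hpa : ∀ i, p i ≤ a i)
    (hs : ∀ i, s i = p i + min (a i - p i) ((C - ∑ i, p i) / S)) :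
    ∀ i, min (max (C / S - 2 * m) 0) (a i) ≤ s i := by
  intro i
  rw [hs i, max_eq_left (Nat.zero_le _)]
  have hsum : (∑ i, p i) ≤ 2 * m * S := by
    calc (∑ i, p i) ≤ ∑ _i : Fin S, 2 * m := Finset.sum_le_sum fun i _ => hp i
    _ = 2 * m * S := by simp [mul_comm]
  have ht : C / S - 2 * m ≤ (C - ∑ i, p i) / S := by
    have h1 : C / S - 2 * m ≤ (C - 2 * m * S) / S := by
      rw [Nat.le_div_iff_mul_le hS, Nat.sub_mul]
      exact Nat.sub_le_sub_right (Nat.div_mul_le_self C S) _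
    exact h1.trans (Nat.div_le_div_right (Nat.sub_le_sub_left hsum C))
  have key : p i + min (a i - p i) ((C - ∑ i, p i) / S)
      = min (a i) (p i + (C - ∑ i, p i) / S) := by
    rw [← Nat.add_min_add_left, Nat.add_sub_cancel' (hpa i)]
  rw [key]
  exact min_le_min (ht.trans (Nat.le_add_left _ _)) le_rfl |>.trans_eq (min_comm _ _)
end

section
/- With the block construction above, the Pareto front of g equals the m'-fold Cartesian product of the Pareto front of f; in particular, if the Pareto front of f has cardinality M_0, then the Pareto front of g has cardinality M_0^{m'}. For f = OneMinMax on {0,1}^(n'), this cardinality is (n' + 1)^{m'}. -/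
/-- The `i`-th block of length `n'` of a bit string of length `m' * n'`. -/
def block {m' n' : ℕ} (x : Fin (m' * n') → Bool) (i : Fin m') : Fin n' → Bool :=
  fun j => x ⟨(i : ℕ) * n' + (j : ℕ), by
    have hi := i.isLt
    have hj := j.isLt
    calc (i : ℕ) * n' + (j : ℕ) < ((i : ℕ) + 1) * n' := by
          rw [Nat.add_mul, Nat.one_mul]; omega
      _ ≤ m' * n' := Nat.mul_le_mul_right _ hi⟩

/-- The `2m'`-objective function obtained from a bi-objective function `f`
(given as `f : point → Fin 2 → ℝ`) by applying `f` to each of the `m'` blocks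
of the argument. -/
def blockObj {m' n' : ℕ} (f : (Fin n' → Bool) → Fin 2 → ℝ)
    (x : Fin (m' * n') → Bool) : Fin m' → Fin 2 → ℝ :=
  fun i c => f (block x i) c

/-- Pareto-optimality for the bi-objective function `f` under component-wise
maximization. -/
def ParetoBi {n' : ℕ} (f : (Fin n' → Bool) → Fin 2 → ℝ) (z : Fin n' → Bool) : Prop :=
  ¬ ∃ w : Fin n' → Bool, (∀ c, f z c ≤ f w c) ∧ (∃ c, f z c < f w c)

/-- Pareto-optimality for the `2m'`-objective block function under
component-wise maximization. -/
def ParetoBlock {m' n' : ℕ} (f : (Fin n' → Bool) → Fin 2 → ℝ)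
    (x : Fin (m' * n') → Bool) : Prop :=
  ¬ ∃ y : Fin (m' * n') → Bool,
    (∀ i c, blockObj f x i c ≤ blockObj f y i c) ∧
    (∃ i c, blockObj f x i c < blockObj f y i c)

/-- Glue `m'` blocks of length `n'` into one string of length `m' * n'`. -/
def glue {m' n' : ℕ} (hn : 0 < n') (z : Fin m' → Fin n' → Bool) :
    Fin (m' * n') → Bool :=
  fun t => z ⟨(t : ℕ) / n', by
      exact (Nat.div_lt_iff_lt_mul hn).mpr t.isLt⟩
    ⟨(t : ℕ) % n', Nat.mod_lt _ hn⟩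

lemma block_glue {m' n' : ℕ} (hn : 0 < n') (z : Fin m' → Fin n' → Bool) (i : Fin m') :
    block (glue hn z) i = z i := by
  funext j
  have hj := j.isLt
  simp only [block, glue]
  have h1 : ((i : ℕ) * n' + (j : ℕ)) / n' = (i : ℕ) := by
    rw [Nat.mul_comm, Nat.mul_add_div hn, Nat.div_eq_of_lt hj]; omega
  have h2 : ((i : ℕ) * n' + (j : ℕ)) % n' = (j : ℕ) := by
    rw [Nat.mul_comm, Nat.mul_add_mod, Nat.mod_eq_of_lt hj]
  congr 1 <;> [exact Fin.ext h1; exact Fin.ext h2]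

/-- The Pareto front of the block function `g` is the `m'`-fold Cartesian
product of the Pareto front of `f`; in particular its cardinality is the
`m'`-th power of the cardinality of the Pareto front of `f`, and for
`f = OneMinMax` it is `(n' + 1)^(m')`. -/
theorem stmt_19 (m' n' : ℕ) (hm' : 0 < m') (hn' : 0 < n')
    (f : (Fin n' → Bool) → Fin 2 → ℝ) :
    ({v : Fin m' → Fin 2 → ℝ |
        ∃ x : Fin (m' * n') → Bool, ParetoBlock f x ∧ blockObj f x = v}
      = {v : Fin m' → Fin 2 → ℝ |
          ∀ i, v i ∈ {u : Fin 2 → ℝ | ∃ z, ParetoBi f z ∧ f z = u}}) ∧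
    Nat.card {v : Fin m' → Fin 2 → ℝ |
        ∃ x : Fin (m' * n') → Bool, ParetoBlock f x ∧ blockObj f x = v}
      = (Nat.card {u : Fin 2 → ℝ | ∃ z, ParetoBi f z ∧ f z = u}) ^ m' ∧
    ((∀ (z : Fin n' → Bool) (c : Fin 2),
        f z c = if c = 0 then (zerosCount z : ℝ) else (onesCount z : ℝ)) →
      Nat.card {v : Fin m' → Fin 2 → ℝ |
          ∃ x : Fin (m' * n') → Bool, ParetoBlock f x ∧ blockObj f x = v}
        = (n' + 1) ^ m') := by
  classical
  set S : Set (Fin 2 → ℝ) := {u : Fin 2 → ℝ | ∃ z, ParetoBi f z ∧ f z = u} with hS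
  have hEq : {v : Fin m' → Fin 2 → ℝ |
        ∃ x : Fin (m' * n') → Bool, ParetoBlock f x ∧ blockObj f x = v}
      = {v : Fin m' → Fin 2 → ℝ | ∀ i, v i ∈ S} := by
    ext v
    constructor
    · rintro ⟨x, hx, rfl⟩ i
      refine ⟨block x i, ?_, rfl⟩
      rintro ⟨w, hle, c, hlt⟩
      apply hx
      refine ⟨glue hn' (Function.update (fun i' => block x i') i w), ?_, ?_⟩
      · intro i' c'
        simp only [blockObj, block_glue]
        by_cases h : i' = i
        · subst h; rw [Function.update_self]; exact hle c'
        · rw [Function.update_of_ne h]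
      · refine ⟨i, c, ?_⟩
        simp only [blockObj, block_glue, Function.update_self]
        exact hlt
    · intro hv
      choose z hz hzv using hv
      refine ⟨glue hn' z, ?_, ?_⟩
      · rintro ⟨y, hle, i, c, hlt⟩
        apply hz i
        refine ⟨block y i, ?_, ⟨c, ?_⟩⟩
        · intro c'
          have := hle i c'
          simpa only [blockObj, block_glue] using this
        · have := hlt
          simp only [blockObj, block_glue] at this
          exact this
      · funext i c
        simp only [blockObj, block_glue]
        exact congrFun (hzv i) c
  refine ⟨hEq, ?_, ?_⟩
  · -- cardinality = card S ^ m'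
    rw [hEq]
    have e : {v : Fin m' → Fin 2 → ℝ | ∀ i, v i ∈ S} ≃ (Fin m' → S) :=
      { toFun := fun v i => ⟨v.1 i, v.2 i⟩
        invFun := fun g => ⟨fun i => (g i).1, fun i => (g i).2⟩
        left_inv := fun v => rfl
        right_inv := fun g => rfl }
    rw [Nat.card_congr e, Nat.card_pi, Finset.prod_const, Finset.card_univ,
      Fintype.card_fin]
  · -- OneMinMax case
    intro hf
    have hcardEq : Nat.card {v : Fin m' → Fin 2 → ℝ |
        ∃ x : Fin (m' * n') → Bool, ParetoBlock f x ∧ blockObj f x = v}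
        = (Nat.card S) ^ m' := by
      rw [hEq]
      have e : {v : Fin m' → Fin 2 → ℝ | ∀ i, v i ∈ S} ≃ (Fin m' → S) :=
        { toFun := fun v i => ⟨v.1 i, v.2 i⟩
          invFun := fun g => ⟨fun i => (g i).1, fun i => (g i).2⟩
          left_inv := fun v => rfl
          right_inv := fun g => rfl }
      rw [Nat.card_congr e, Nat.card_pi, Finset.prod_const, Finset.card_univ,
        Fintype.card_fin]
    rw [hcardEq]
    -- compute Nat.card S = n' + 1
    have hsum : ∀ z : Fin n' → Bool, f z 0 + f z 1 = (n' : ℝ) := by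
      intro z
      rw [hf z 0, hf z 1, if_pos rfl, if_neg (by decide : ¬(1 : Fin 2) = 0)]
      have h2 : zerosCount z + onesCount z = n' := by
        have := ones_add_zeros z; omega
      rw [← Nat.cast_add, h2]
    have hpar : ∀ z : Fin n' → Bool, ParetoBi f z := by
      rintro z ⟨w, hle, c, hlt⟩
      have h0 : f z 0 ≤ f w 0 := hle 0
      have h1 : f z 1 ≤ f w 1 := hle 1
      have : f z 0 + f z 1 < f w 0 + f w 1 := by
        fin_cases c
        · exact add_lt_add_of_lt_of_le hlt h1
        · exact add_lt_add_of_le_of_lt h0 hlt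
      rw [hsum z, hsum w] at this
      exact lt_irrefl _ this
    have hzeros : ∀ z : Fin n' → Bool, zerosCount z = n' - onesCount z := by
      intro z; have := ones_add_zeros z; omega
    set φ : Fin (n' + 1) → (Fin 2 → ℝ) :=
      fun k c => if c = 0 then ((n' - (k : ℕ) : ℕ) : ℝ) else ((k : ℕ) : ℝ) with hφ
    have hones_le : ∀ z : Fin n' → Bool, onesCount z ≤ n' := by
      intro z; have := ones_add_zeros z; omega
    have hScount : ∀ z : Fin n' → Bool, ∀ k : ℕ, k ≤ n' →
        onesCount (fun j : Fin n' => decide ((j : ℕ) < k)) = k := by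
      intro z k hk
      unfold onesCount
      have himg : (Finset.univ.filter fun j : Fin n' =>
          (decide ((j : ℕ) < k)) = true).image Fin.val = Finset.range k := by
        ext a
        simp only [Finset.mem_image, Finset.mem_filter, Finset.mem_univ, true_and,
          decide_eq_true_eq, Finset.mem_range]
        constructor
        · rintro ⟨j, hj, rfl⟩; exact hj
        · intro ha
          exact ⟨⟨a, lt_of_lt_of_le ha hk⟩, ha, rfl⟩
      calc (Finset.univ.filter fun j : Fin n' => (decide ((j : ℕ) < k)) = true).card
          = ((Finset.univ.filter fun j : Fin n' =>
              (decide ((j : ℕ) < k)) = true).image Fin.val).card :=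
            (Finset.card_image_of_injective _ Fin.val_injective).symm
        _ = k := by rw [himg, Finset.card_range]
    have hrange : S = Set.range φ := by
      ext u
      constructor
      · rintro ⟨z, _, rfl⟩
        refine ⟨⟨onesCount z, Nat.lt_succ_of_le (hones_le z)⟩, ?_⟩
        funext c
        rw [hf z c]
        fin_cases c
        · simp [hφ, hzeros z]
        · simp [hφ]
      · rintro ⟨k, rfl⟩
        set z : Fin n' → Bool := fun j => decide ((j : ℕ) < (k : ℕ)) with hzdef
        have hk : (k : ℕ) ≤ n' := Nat.lt_succ_iff.mp k.isLt
        have hones : onesCount z = (k : ℕ) := hScount z (k : ℕ) hk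
        refine ⟨z, hpar z, ?_⟩
        funext c
        rw [hf z c]
        fin_cases c
        · simp [hφ, hzeros z, hones]
        · simp [hφ, hones]
    have hinj : Function.Injective φ := by
      intro a b hab
      have := congrFun hab 1
      simp only [hφ, if_neg (by decide : (1 : Fin 2) ≠ 0)] at this
      exact Fin.ext (Nat.cast_injective this)
    rw [hrange, Nat.card_range_of_injective hinj, Nat.card_eq_fintype_card,
      Fintype.card_fin]
end
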